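/- Let A and B be circles in ℝ² with centers (c_A, 0) and (c_B, 0) and radii r_A > 0 and r_B > 0, with |c_B − c_A| > r_A + r_B. Then for every x₀ ∈ ℝ and every line {(x,y) : y = kx + b} that intersects both circles, there exist k', b' ∈ ℝ such that the line {(x,y) : y = k'x + b'} is a common tangent of A and B (distance r_A from (c_A,0) and r_B from (c_B,0)) and k·x₀ + b ≤ k'·x₀ + b'. -/

import Mathlib

noncomputable section

abbrev E2 := EuclideanSpace ℝ (Fin 2)

/-- The point (x, y) ∈ ℝ². -/
def mkVec (x y : ℝ) : E2 := EuclideanSpace.single 0 x + EuclideanSpace.single 1 y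

/-- The non-vertical line y = k x + b in ℝ². -/
def slLine (k b : ℝ) : Set E2 := {p : E2 | p 1 = k * p 0 + b}






lemma mkVec_apply0 (x y : ℝ) : mkVec x y 0 = x := by
  simp [mkVec, EuclideanSpace.single_apply]

lemma mkVec_apply1 (x y : ℝ) : mkVec x y 1 = y := by
  simp [mkVec, EuclideanSpace.single_apply]

lemma mkVec_mem_slLine (k b x : ℝ) : mkVec x (k*x+b) ∈ slLine k b := by
  simp [slLine, mkVec_apply0, mkVec_apply1]

lemma dist_mkVec (c : ℝ) (p : E2) :
    dist (mkVec c 0) p = Real.sqrt ((p 0 - c)^2 + (p 1)^2) := by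
  rw [EuclideanSpace.dist_eq, Fin.sum_univ_two]
  congr 1
  rw [Real.dist_eq, Real.dist_eq, sq_abs, sq_abs, mkVec_apply0, mkVec_apply1]
  ring

/-- If `(k c + b)^2 = r^2 (1+k^2)` then the line `y = kx+b` is tangent to the
circle of center `(c,0)` and radius `r`. -/
lemma infDist_slLine_eq (k b c r : ℝ) (hr : 0 < r)
    (h : (k*c+b)^2 = r^2*(1+k^2)) :
    Metric.infDist (mkVec c 0) (slLine k b) = r := by
  have hk : (0:ℝ) < 1 + k^2 := by positivity
  apply le_antisymm
  · -- exhibit the foot of the perpendicular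
    set xt : ℝ := c - k*(k*c+b)/(1+k^2) with hxt
    have hmem := mkVec_mem_slLine k b xt
    refine le_trans (Metric.infDist_le_dist_of_mem hmem) ?_
    rw [dist_mkVec, mkVec_apply0, mkVec_apply1]
    have h1 : k*xt+b = (k*c+b)/(1+k^2) := by
      rw [hxt]; field_simp; ring
    have h2 : (xt - c)^2 + (k*xt+b)^2 = r^2 := by
      rw [h1, hxt]
      field_simp
      nlinarith [h]
    rw [h2, Real.sqrt_sq hr.le]
  · have hne : (slLine k b).Nonempty := ⟨_, mkVec_mem_slLine k b 0⟩
    rw [Metric.infDist_eq_iInf]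
    have : Nonempty (slLine k b) := hne.to_subtype
    refine le_ciInf fun y => ?_
    obtain ⟨p, hp⟩ := y
    have hp' : p 1 = k * p 0 + b := hp
    show r ≤ dist (mkVec c 0) p
    rw [dist_mkVec, hp']
    have : r^2 ≤ (p 0 - c)^2 + (k * p 0 + b)^2 := by
      nlinarith [sq_nonneg (k*(k * p 0 + b) - (c - p 0)), h, sq_nonneg (p 0 - c), hk]
    calc r = Real.sqrt (r^2) := (Real.sqrt_sq hr.le).symm
    _ ≤ _ := Real.sqrt_le_sqrt this

/-- Derivative of w ↦ (a + X w)/√(d² − (w−c)²). -/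
lemma edge_hasDerivAt (a X c d w : ℝ) (hw : (w-c)^2 < d^2) :
    HasDerivAt (fun v => (a + X*v)/Real.sqrt (d^2 - (v-c)^2))
      ((X*d^2 + (a+X*c)*(w-c)) / ((d^2-(w-c)^2) * Real.sqrt (d^2-(w-c)^2))) w := by
  have hD : (0:ℝ) < d^2 - (w-c)^2 := by linarith
  have hs : (0:ℝ) < Real.sqrt (d^2 - (w-c)^2) := Real.sqrt_pos.2 hD
  have hDd : HasDerivAt (fun v : ℝ => d^2 - (v-c)^2) (-(2*(w-c))) w := by
    have h1 : HasDerivAt (fun v : ℝ => (v-c)^2) (2*(w-c)) w := by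
      have := ((hasDerivAt_id w).sub_const c).fun_pow 2
      simpa using this
    simpa using (hasDerivAt_const w (d^2)).fun_sub h1
  have hg : HasDerivAt (fun v : ℝ => Real.sqrt (d^2 - (v-c)^2))
      (-(2*(w-c)) / (2 * Real.sqrt (d^2-(w-c)^2))) w := hDd.sqrt (by positivity)
  have hN : HasDerivAt (fun v : ℝ => a + X*v) X w := by
    simpa using (hasDerivAt_const w a).fun_add ((hasDerivAt_id w).const_mul X)
  have := hN.fun_div hg (ne_of_gt hs)
  refine this.congr_deriv ?_
  have hsq : Real.sqrt (d^2-(w-c)^2) ^ 2 = d^2-(w-c)^2 := Real.sq_sqrt hD.le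
  field_simp
  linear_combination ((d^2-(w-c)^2)*X - (X*d^2+(w-c)*(a+X*c))) * hsq

/-- On an interval inside the domain, the function v ↦ (a+Xv)/√(d²−(v−c)²) is
bounded by its values at the endpoints, provided a + Xc > 0. -/
lemma edge_max (a X c d v₁ v₂ v : ℝ) (hslope : 0 < a + X*c)
    (h1 : v₁ ≤ v) (h2 : v ≤ v₂)
    (hd1 : (v₁-c)^2 < d^2) (hd2 : (v₂-c)^2 < d^2) :
    (a + X*v)/Real.sqrt (d^2 - (v-c)^2) ≤
      max ((a + X*v₁)/Real.sqrt (d^2 - (v₁-c)^2))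
          ((a + X*v₂)/Real.sqrt (d^2 - (v₂-c)^2)) := by
  set h : ℝ → ℝ := fun w => (a + X*w)/Real.sqrt (d^2 - (w-c)^2) with hh
  -- all points of [v₁, v₂] are in the domain
  have hdom : ∀ w, v₁ ≤ w → w ≤ v₂ → (w-c)^2 < d^2 := by
    intro w hw1 hw2
    rcases le_total w c with hc | hc
    · nlinarith
    · nlinarith
  by_cases hsign : X*d^2 + (a+X*c)*(v-c) ≤ 0
  · -- h is antitone on [v₁, v]
    refine le_trans ?_ (le_max_left _ _)
    have hanti : AntitoneOn h (Set.Icc v₁ v) := by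
      apply antitoneOn_of_deriv_nonpos (convex_Icc _ _)
      · intro w hw
        obtain ⟨hw1, hw2⟩ := hw
        exact ((edge_hasDerivAt a X c d w (hdom w hw1 (hw2.trans h2))).differentiableAt).continuousAt.continuousWithinAt
      · intro w hw
        rw [interior_Icc] at hw
        exact ((edge_hasDerivAt a X c d w (hdom w hw.1.le (hw.2.le.trans h2))).differentiableAt).differentiableWithinAt
      · intro w hw
        rw [interior_Icc] at hw
        have hDw := hdom w hw.1.le (hw.2.le.trans h2)
        rw [(edge_hasDerivAt a X c d w hDw).deriv]
        have hnum : X*d^2 + (a+X*c)*(w-c) ≤ 0 := by nlinarith [hw.2]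
        have hden : (0:ℝ) < (d^2-(w-c)^2) * Real.sqrt (d^2-(w-c)^2) := by
          have : (0:ℝ) < d^2-(w-c)^2 := by linarith
          positivity
        exact div_nonpos_of_nonpos_of_nonneg hnum hden.le
    exact hanti (Set.left_mem_Icc.2 h1) (Set.right_mem_Icc.2 h1) h1
  · -- h is monotone on [v, v₂]
    push_neg at hsign
    refine le_trans ?_ (le_max_right _ _)
    have hmono : MonotoneOn h (Set.Icc v v₂) := by
      apply monotoneOn_of_deriv_nonneg (convex_Icc _ _)
      · intro w hw
        obtain ⟨hw1, hw2⟩ := hw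
        exact ((edge_hasDerivAt a X c d w (hdom w (h1.trans hw1) hw2)).differentiableAt).continuousAt.continuousWithinAt
      · intro w hw
        rw [interior_Icc] at hw
        exact ((edge_hasDerivAt a X c d w (hdom w (h1.trans hw.1.le) hw.2.le)).differentiableAt).differentiableWithinAt
      · intro w hw
        rw [interior_Icc] at hw
        have hDw := hdom w (h1.trans hw.1.le) hw.2.le
        rw [(edge_hasDerivAt a X c d w hDw).deriv]
        have hnum : 0 ≤ X*d^2 + (a+X*c)*(w-c) := by nlinarith [hw.1]
        have hden : (0:ℝ) < (d^2-(w-c)^2) * Real.sqrt (d^2-(w-c)^2) := by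
          have : (0:ℝ) < d^2-(w-c)^2 := by linarith
          positivity
        positivity
    exact hmono (Set.left_mem_Icc.2 h2) (Set.right_mem_Icc.2 h2) h2

lemma abs_le_of_sq_le_sq'' (x y : ℝ) (hy : 0 ≤ y) (h : x^2 ≤ y^2) : |x| ≤ y := by
  have := Real.sqrt_le_sqrt h
  rwa [Real.sqrt_sq_eq_abs, Real.sqrt_sq hy] at this

set_option maxHeartbeats 1000000 in
/-- The heart of the matter, with all geometry stripped away. -/
lemma main_ineq (d X rA rB k P Q s : ℝ) (hrA : 0 < rA) (hrB : 0 < rB)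
    (hsep : rA + rB < d) (hs : 0 < s) (hs2 : s^2 = 1 + k^2)
    (hQP : Q - P = k*d) (hPa : |P| ≤ rA*s) (hQa : |Q| ≤ rB*s) :
    ((d-X)*P + X*Q)/d ≤ ((d-X)*rA + X*rB)/Real.sqrt (d^2 - (rA-rB)^2) ∨
    ((d-X)*P + X*Q)/d ≤ ((d-X)*rA - X*rB)/Real.sqrt (d^2 - (rA+rB)^2) ∨
    ((d-X)*P + X*Q)/d ≤ (X*rB - (d-X)*rA)/Real.sqrt (d^2 - (rA+rB)^2) := by
  have hd : 0 < d := by linarith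
  have hfa : (0:ℝ) < d^2 - (rA+rB)^2 := by nlinarith
  have hea : (0:ℝ) < d^2 - (rA-rB)^2 := by nlinarith
  have hf : 0 < Real.sqrt (d^2 - (rA+rB)^2) := Real.sqrt_pos.2 hfa
  have he : 0 < Real.sqrt (d^2 - (rA-rB)^2) := Real.sqrt_pos.2 hea
  have hf2 : Real.sqrt (d^2 - (rA+rB)^2)^2 = d^2 - (rA+rB)^2 := Real.sq_sqrt hfa.le
  have hPu : P ≤ rA*s := le_trans (le_abs_self P) hPa
  have hPl : -(rA*s) ≤ P := neg_le_of_neg_le (le_trans (neg_le_abs P) hPa)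
  have hQu : Q ≤ rB*s := le_trans (le_abs_self Q) hQa
  have hQl : -(rB*s) ≤ Q := neg_le_of_neg_le (le_trans (neg_le_abs Q) hQa)
  -- s * sqrt(d²-(rA+rB)²) ≤ d
  have hsf : s*Real.sqrt (d^2 - (rA+rB)^2) ≤ d := by
    have h3 : |Q-P| ≤ (rA+rB)*s := by
      calc |Q-P| = |Q + -P| := by rw [sub_eq_add_neg]
      _ ≤ |Q| + |-P| := abs_add_le _ _
      _ = |Q| + |P| := by rw [abs_neg]
      _ ≤ rB*s + rA*s := add_le_add hQa hPa
      _ = (rA+rB)*s := by ring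
    have h4 : (Q-P)^2 ≤ ((rA+rB)*s)^2 := by
      rw [← sq_abs (Q-P)]
      exact pow_le_pow_left₀ (abs_nonneg _) h3 2
    rw [hQP] at h4
    have hkd : k^2*d^2 ≤ (rA+rB)^2*s^2 := by nlinarith [h4]
    have hsq : (s*Real.sqrt (d^2 - (rA+rB)^2))^2 ≤ d^2 := by
      rw [mul_pow, hs2, hf2]; nlinarith [hkd]
    nlinarith [mul_pos hs hf, hd, hsq]
  rcases le_or_gt X 0 with hX | hX
  · -- left region : internal tangent over A
    right; left
    have hnum : (d-X)*P + X*Q ≤ s*((d-X)*rA - X*rB) := by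
      have h1 : (d-X)*P ≤ (d-X)*(rA*s) := by
        apply mul_le_mul_of_nonneg_left hPu; linarith
      have h2 : X*Q ≤ X*(-(rB*s)) := mul_le_mul_of_nonpos_left hQl hX
      linarith [h1, h2]
    have hM : 0 ≤ (d-X)*rA - X*rB := by
      have w1 : 0 ≤ (-X)*rB := mul_nonneg (by linarith) hrB.le
      have w2 : 0 ≤ (d-X)*rA := mul_nonneg (by linarith) hrA.le
      linarith
    calc ((d-X)*P + X*Q)/d ≤ s*((d-X)*rA - X*rB)/d := by gcongr
    _ ≤ ((d-X)*rA - X*rB)/Real.sqrt (d^2 - (rA+rB)^2) := by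
          rw [div_le_div_iff₀ hd hf]
          calc s*((d-X)*rA - X*rB)*Real.sqrt (d^2 - (rA+rB)^2)
              = ((d-X)*rA - X*rB)*(s*Real.sqrt (d^2 - (rA+rB)^2)) := by ring
          _ ≤ ((d-X)*rA - X*rB)*d := mul_le_mul_of_nonneg_left hsf hM
  · rcases le_or_gt d X with hX2 | hX2
    · -- right region : internal tangent over B
      right; right
      have hnum : (d-X)*P + X*Q ≤ s*(X*rB - (d-X)*rA) := by
        have h1 : (d-X)*P ≤ (d-X)*(-(rA*s)) := mul_le_mul_of_nonpos_left hPl (by linarith)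
        have h2 : X*Q ≤ X*(rB*s) := mul_le_mul_of_nonneg_left hQu (by linarith)
        linarith [h1, h2]
      have hM : 0 ≤ X*rB - (d-X)*rA := by
        have w1 : 0 ≤ X*rB := mul_nonneg (by linarith) hrB.le
        have w2 : 0 ≤ (X-d)*rA := mul_nonneg (by linarith) hrA.le
        linarith
      calc ((d-X)*P + X*Q)/d ≤ s*(X*rB - (d-X)*rA)/d := by gcongr
      _ ≤ (X*rB - (d-X)*rA)/Real.sqrt (d^2 - (rA+rB)^2) := by
            rw [div_le_div_iff₀ hd hf]
            calc s*(X*rB - (d-X)*rA)*Real.sqrt (d^2 - (rA+rB)^2)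
                = (X*rB - (d-X)*rA)*(s*Real.sqrt (d^2 - (rA+rB)^2)) := by ring
            _ ≤ (X*rB - (d-X)*rA)*d := mul_le_mul_of_nonneg_left hsf hM
    · -- middle region: use the edge lemma
      have hXl : (0:ℝ) ≤ X := hX.le
      have hXu : X ≤ d := hX2.le
      set u : ℝ := P/s with hu_def
      set v : ℝ := Q/s with hv_def
      have hul : -rA ≤ u := by rw [hu_def, le_div_iff₀ hs]; linarith
      have huu : u ≤ rA := by rw [hu_def, div_le_iff₀ hs]; linarith
      have hvl : -rB ≤ v := by rw [hv_def, le_div_iff₀ hs]; linarith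
      have hvu : v ≤ rB := by rw [hv_def, div_le_iff₀ hs]; linarith
      have hvu_eq : v - u = k*d/s := by rw [hu_def, hv_def, ← hQP]; ring
      have hden : d^2 - (v-u)^2 = (d/s)^2 := by
        rw [hvu_eq, div_pow, div_pow]
        rw [hs2]
        field_simp
        ring
      have hsqrt : Real.sqrt (d^2 - (v-u)^2) = d/s := by
        rw [hden]; exact Real.sqrt_sq (by positivity)
      have hFval : ((d-X)*P + X*Q)/d = ((d-X)*u + X*v)/Real.sqrt (d^2-(v-u)^2) := by
        rw [hsqrt, hu_def, hv_def]
        field_simp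
        try ring
      by_cases hδ : rA - u ≤ rB - v
      · -- push to the edge u = rA
        have hru : 0 ≤ rA - u := by linarith
        have hstep : ((d-X)*u + X*v)/Real.sqrt (d^2-(v-u)^2) ≤
            ((d-X)*rA + X*(v + (rA-u)))/Real.sqrt (d^2-((v + (rA-u))-rA)^2) := by
          rw [show (v + (rA-u))-rA = v - u by ring, hsqrt]
          have hnum : (d-X)*u + X*v ≤ (d-X)*rA + X*(v + (rA-u)) := by
            nlinarith [mul_nonneg hd.le hru]
          gcongr
        have hedge := edge_max ((d-X)*rA) X rA d (-rB) rB (v + (rA-u))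
          (by have : (d-X)*rA + X*rA = d*rA := by ring
              rw [this]; positivity)
          (by linarith) (by linarith)
          (by nlinarith) (by nlinarith)
        rw [show ((-rB:ℝ)-rA)^2 = (rA+rB)^2 by ring, show ((rB:ℝ)-rA)^2 = (rA-rB)^2 by ring]
          at hedge
        have htot := le_trans (hFval.le.trans hstep) hedge
        rcases le_max_iff.1 htot with h | h
        · exact Or.inr (Or.inl (h.trans_eq (by ring)))
        · exact Or.inl (h.trans_eq (by ring))
      · -- push to the edge v = rB
        have hrv : 0 ≤ rB - v := by linarith
        have hstep : ((d-X)*u + X*v)/Real.sqrt (d^2-(v-u)^2) ≤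
            (X*rB + (d-X)*(u + (rB-v)))/Real.sqrt (d^2-((u + (rB-v))-rB)^2) := by
          rw [show (u + (rB-v))-rB = -(v - u) by ring, show d^2 - (-(v-u))^2 = d^2-(v-u)^2 by ring,
            hsqrt]
          have hnum : (d-X)*u + X*v ≤ X*rB + (d-X)*(u + (rB-v)) := by
            nlinarith [mul_nonneg hd.le hrv]
          gcongr
        have hedge := edge_max (X*rB) (d-X) rB d (-rA) rA (u + (rB-v))
          (by have : X*rB + (d-X)*rB = d*rB := by ring
              rw [this]; positivity)
          (by linarith) (by linarith)
          (by nlinarith) (by nlinarith)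
        rw [show ((-rA:ℝ)-rB)^2 = (rA+rB)^2 by ring, show ((rA:ℝ)-rB)^2 = (rA-rB)^2 by ring]
          at hedge
        have htot := le_trans (hFval.le.trans hstep) hedge
        rcases le_max_iff.1 htot with h | h
        · exact Or.inr (Or.inr (h.trans_eq (by ring)))
        · exact Or.inl (h.trans_eq (by ring))

lemma key (cA cB rA rB : ℝ) (hrA : 0 < rA) (hrB : 0 < rB)
    (hsep : rA + rB < cB - cA) (x₀ k b : ℝ)
    (hA : (k*cA+b)^2 ≤ rA^2*(1+k^2)) (hB : (k*cB+b)^2 ≤ rB^2*(1+k^2)) :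
    ∃ k' b' : ℝ, (k'*cA+b')^2 = rA^2*(1+k'^2) ∧ (k'*cB+b')^2 = rB^2*(1+k'^2) ∧
      k*x₀+b ≤ k'*x₀+b' := by
  have hd : 0 < cB - cA := by linarith
  have hs1 : (0:ℝ) < 1 + k^2 := by positivity
  have hs : 0 < Real.sqrt (1+k^2) := Real.sqrt_pos.2 hs1
  have hs2 : Real.sqrt (1+k^2)^2 = 1+k^2 := Real.sq_sqrt hs1.le
  have hfa : (0:ℝ) < (cB-cA)^2 - (rA+rB)^2 := by nlinarith
  have hea : (0:ℝ) < (cB-cA)^2 - (rA-rB)^2 := by nlinarith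
  have hf : 0 < Real.sqrt ((cB-cA)^2 - (rA+rB)^2) := Real.sqrt_pos.2 hfa
  have he : 0 < Real.sqrt ((cB-cA)^2 - (rA-rB)^2) := Real.sqrt_pos.2 hea
  have hf2 : Real.sqrt ((cB-cA)^2 - (rA+rB)^2)^2 = (cB-cA)^2 - (rA+rB)^2 := Real.sq_sqrt hfa.le
  have he2 : Real.sqrt ((cB-cA)^2 - (rA-rB)^2)^2 = (cB-cA)^2 - (rA-rB)^2 := Real.sq_sqrt hea.le
  have hPa : |k*cA+b| ≤ rA*Real.sqrt (1+k^2) := by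
    refine abs_le_of_sq_le_sq'' _ _ (by positivity) ?_
    rw [mul_pow, hs2]; exact hA
  have hQa : |k*cB+b| ≤ rB*Real.sqrt (1+k^2) := by
    refine abs_le_of_sq_le_sq'' _ _ (by positivity) ?_
    rw [mul_pow, hs2]; exact hB
  have hQP : (k*cB+b) - (k*cA+b) = k*(cB-cA) := by ring
  have main := main_ineq (cB-cA) (x₀-cA) rA rB k (k*cA+b) (k*cB+b) (Real.sqrt (1+k^2))
    hrA hrB hsep hs hs2 hQP hPa hQa
  have hval : k*x₀+b = (((cB-cA)-(x₀-cA))*(k*cA+b) + (x₀-cA)*(k*cB+b))/(cB-cA) := by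
    rw [eq_div_iff hd.ne']; ring
  set e := Real.sqrt ((cB-cA)^2 - (rA-rB)^2) with he_def
  set f := Real.sqrt ((cB-cA)^2 - (rA+rB)^2) with hf_def
  have hecoef : 1 + ((rB-rA)/e)^2 = (cB-cA)^2/e^2 := by
    field_simp
    linear_combination he2
  have hfcoef1 : 1 + (-(rA+rB)/f)^2 = (cB-cA)^2/f^2 := by
    field_simp
    linear_combination hf2
  have hfcoef2 : 1 + ((rA+rB)/f)^2 = (cB-cA)^2/f^2 := by
    field_simp
    linear_combination hf2
  rcases main with h | h | h
  · -- external tangent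
    refine ⟨(rB-rA)/e, rA*(cB-cA)/e - ((rB-rA)/e)*cA, ?_, ?_, ?_⟩
    · rw [show (rB-rA)/e*cA + (rA*(cB-cA)/e - ((rB-rA)/e)*cA) = rA*(cB-cA)/e by ring, hecoef]
      ring
    · rw [show (rB-rA)/e*cB + (rA*(cB-cA)/e - ((rB-rA)/e)*cA) = rB*(cB-cA)/e by ring, hecoef]
      ring
    · calc k*x₀+b = _ := hval
      _ ≤ (((cB-cA)-(x₀-cA))*rA + (x₀-cA)*rB)/e := h
      _ = (rB-rA)/e*x₀ + (rA*(cB-cA)/e - ((rB-rA)/e)*cA) := by ring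
  · -- internal tangent touching A from above
    refine ⟨-(rA+rB)/f, rA*(cB-cA)/f - (-(rA+rB)/f)*cA, ?_, ?_, ?_⟩
    · rw [show -(rA+rB)/f*cA + (rA*(cB-cA)/f - (-(rA+rB)/f)*cA) = rA*(cB-cA)/f by ring, hfcoef1]
      ring
    · rw [show -(rA+rB)/f*cB + (rA*(cB-cA)/f - (-(rA+rB)/f)*cA)
          = -(rB*(cB-cA))/f by ring, hfcoef1]
      ring
    · calc k*x₀+b = _ := hval
      _ ≤ (((cB-cA)-(x₀-cA))*rA - (x₀-cA)*rB)/f := h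
      _ = -(rA+rB)/f*x₀ + (rA*(cB-cA)/f - (-(rA+rB)/f)*cA) := by ring
  · -- internal tangent touching A from below
    refine ⟨(rA+rB)/f, -(rA*(cB-cA))/f - ((rA+rB)/f)*cA, ?_, ?_, ?_⟩
    · rw [show (rA+rB)/f*cA + (-(rA*(cB-cA))/f - ((rA+rB)/f)*cA) = -(rA*(cB-cA))/f by ring,
        hfcoef2]
      ring
    · rw [show (rA+rB)/f*cB + (-(rA*(cB-cA))/f - ((rA+rB)/f)*cA) = rB*(cB-cA)/f by ring, hfcoef2]
      ring
    · calc k*x₀+b = _ := hval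
      _ ≤ ((x₀-cA)*rB - ((cB-cA)-(x₀-cA))*rA)/f := h
      _ = (rA+rB)/f*x₀ + (-(rA*(cB-cA))/f - ((rA+rB)/f)*cA) := by ring

lemma meets_sphere_bound (k b c r : ℝ) (hr : 0 < r)
    (h : (slLine k b ∩ Metric.sphere (mkVec c 0) r).Nonempty) :
    (k*c+b)^2 ≤ r^2*(1+k^2) := by
  obtain ⟨p, hpl, hps⟩ := h
  have hps' : dist (mkVec c 0) p = r := by
    rw [dist_comm]; exact Metric.mem_sphere.1 hps
  rw [dist_mkVec] at hps'
  have hsq : (p 0 - c)^2 + (p 1)^2 = r^2 := by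
    have h0 : (0:ℝ) ≤ (p 0 - c)^2 + (p 1)^2 := by positivity
    rw [← hps', Real.sq_sqrt h0]
  have hpl' : p 1 = k * p 0 + b := hpl
  rw [hpl'] at hsq
  nlinarith [sq_nonneg (k*(k*(p 0)+b) - (c - p 0)), hsq]

/-- any line meeting two disjoint circles centered on the x-axis
is dominated, at every abscissa x₀, by some common tangent of the circles. -/
theorem line_dominated_by_common_tangent
    (cA cB rA rB : ℝ) (hrA : 0 < rA) (hrB : 0 < rB)
    (hsep : rA + rB < |cB - cA|) :
    ∀ x₀ k b : ℝ,
      (slLine k b ∩ Metric.sphere (mkVec cA 0) rA).Nonempty →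
      (slLine k b ∩ Metric.sphere (mkVec cB 0) rB).Nonempty →
      ∃ k' b' : ℝ,
        Metric.infDist (mkVec cA 0) (slLine k' b') = rA ∧
        Metric.infDist (mkVec cB 0) (slLine k' b') = rB ∧
        k * x₀ + b ≤ k' * x₀ + b' := by
  intro x₀ k b hAmeet hBmeet
  have hA := meets_sphere_bound k b cA rA hrA hAmeet
  have hB := meets_sphere_bound k b cB rB hrB hBmeet
  rcases abs_cases (cB - cA) with ⟨habs, _⟩ | ⟨habs, _⟩
  · rw [habs] at hsep
    obtain ⟨k', b', h1, h2, h3⟩ := key cA cB rA rB hrA hrB hsep x₀ k b hA hB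
    exact ⟨k', b', infDist_slLine_eq k' b' cA rA hrA h1,
      infDist_slLine_eq k' b' cB rB hrB h2, h3⟩
  · rw [habs] at hsep
    have hsep' : rB + rA < cA - cB := by linarith
    obtain ⟨k', b', h1, h2, h3⟩ := key cB cA rB rA hrB hrA hsep' x₀ k b hB hA
    exact ⟨k', b', infDist_slLine_eq k' b' cA rA hrA h2,
      infDist_slLine_eq k' b' cB rB hrB h1, h3⟩
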